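/- Let Δ be a Newton polyhedron with vertex set V, let E be a compact edge with endpoints a, b, and suppose V ≠ {a,b}. Define ψ(ξ) = min_{v ∈ V∖{a,b}} ⟨ξ,v⟩ − ⟨ξ,a⟩ for ξ ∈ ℝ_{≥0}^n. If E is loose, then there is no ξ ∈ ℝ_{≥0}^n with ψ(ξ) < 0 and ⟨ξ,a⟩ = ⟨ξ,b⟩; equivalently, if ψ(ξ_1) < 0 for some ξ_1 with ⟨ξ_1,a⟩ = ⟨ξ_1,b⟩, then E is contained in a compact face of dimension ≥ 2. -/

import Mathlib

open scoped Pointwise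

noncomputable section

/-- Standard scalar product on `Fin n → ℝ`. -/
def dotR {n : ℕ} (ξ a : Fin n → ℝ) : ℝ := ∑ i, ξ i * a i

/-- The nonnegative orthant in `Fin n → ℝ`. -/
def posOrthant (n : ℕ) : Set (Fin n → ℝ) := {x | ∀ i, 0 ≤ x i}

/-- A Newton polyhedron: the convex hull of `S + ℝ_{≥0}^n` for a nonempty `S ⊆ ℕ^n`. -/
def IsNewtonPolyhedron {n : ℕ} (Δ : Set (Fin n → ℝ)) : Prop :=
  ∃ S : Set (Fin n → ℕ), S.Nonempty ∧
    Δ = convexHull ℝ (((fun α : Fin n → ℕ => fun i => (α i : ℝ)) '' S) + posOrthant n)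

/-- The face of `Δ` in direction `ξ`: the points of `Δ` minimizing `⟨ξ, ·⟩`. -/
def faceOf {n : ℕ} (Δ : Set (Fin n → ℝ)) (ξ : Fin n → ℝ) : Set (Fin n → ℝ) :=
  {a ∈ Δ | ∀ b ∈ Δ, dotR ξ a ≤ dotR ξ b}

/-- `F` is a face of `Δ` (cut out by some `ξ` with nonnegative entries). -/
def IsFaceOf {n : ℕ} (Δ F : Set (Fin n → ℝ)) : Prop :=
  ∃ ξ : Fin n → ℝ, (∀ i, 0 ≤ ξ i) ∧ F = faceOf Δ ξ

/-- The dimension of a face: the rank of its direction space. -/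
def faceDim {n : ℕ} (F : Set (Fin n → ℝ)) : ℕ := Module.finrank ℝ (vectorSpan ℝ F)

/-- A loose edge: a compact edge not contained in any compact face of dimension ≥ 2. -/
def IsLooseEdge {n : ℕ} (Δ E : Set (Fin n → ℝ)) : Prop :=
  IsFaceOf Δ E ∧ IsCompact E ∧ faceDim E = 1 ∧
    ∀ F : Set (Fin n → ℝ), IsFaceOf Δ F → IsCompact F → E ⊆ F → faceDim F ≤ 1

/-- `v` is a vertex of `Δ` : the singleton `{v}` is a face. -/
def IsVertexOf {n : ℕ} (Δ : Set (Fin n → ℝ)) (v : Fin n → ℝ) : Prop :=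
  IsFaceOf Δ {v}

/-! Write `Δ = conv(A + ℝ≥0ⁿ)` and `E = Δ^ξ₀ = [a, b]`. Compactness of `E` forces `ξ₀ > 0`.
Suppose `ξ₁ ≥ 0` is constant on `E` and some vertex has smaller `ξ₁`-value. Tilting `ξ₀` to
`η = ξ₀ + ε ξ₁` keeps `a` and `b` minimal as long as `ε` does not exceed the least slope
`(⟨ξ₀,g⟩ - ⟨ξ₀,a⟩) / (⟨ξ₁,a⟩ - ⟨ξ₁,g⟩)` over the generators `g` with `⟨ξ₁,g⟩ < ⟨ξ₁,a⟩`; this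
minimum is attained because `ξ₀ > 0` leaves finitely many lattice points below any level. For
that `ε`, the face `Δ^η` is compact (as `η > 0`), contains `E` and a generator off the hyperplane
`⟨ξ₁,·⟩ = ⟨ξ₁,a⟩`, so it has dimension at least 2 and `E` is not loose. -/

open Matrix

section DotR

variable {n : ℕ}

theorem dotR_eq_dotProduct (ξ x : Fin n → ℝ) : dotR ξ x = ξ ⬝ᵥ x := rfl

def dotRLinear (ξ : Fin n → ℝ) : (Fin n → ℝ) →ₗ[ℝ] ℝ where
  toFun := dotR ξ
  map_add' := dotProduct_add ξ
  map_smul' c x := dotProduct_smul c ξ x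

@[simp]
theorem dotRLinear_apply (ξ x : Fin n → ℝ) : dotRLinear ξ x = dotR ξ x := rfl

theorem dotR_add (ξ x y : Fin n → ℝ) : dotR ξ (x + y) = dotR ξ x + dotR ξ y :=
  dotProduct_add ξ x y

theorem dotR_smul (ξ : Fin n → ℝ) (c : ℝ) (x : Fin n → ℝ) : dotR ξ (c • x) = c * dotR ξ x :=
  dotProduct_smul c ξ x

theorem dotR_add_smul_left (ξ ζ : Fin n → ℝ) (c : ℝ) (x : Fin n → ℝ) :
    dotR (ξ + c • ζ) x = dotR ξ x + c * dotR ζ x := by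
  rw [dotR_eq_dotProduct, add_dotProduct, smul_dotProduct]
  rfl

theorem dotR_nonneg {ξ x : Fin n → ℝ} (hξ : 0 ≤ ξ) (hx : 0 ≤ x) : 0 ≤ dotR ξ x :=
  dotProduct_nonneg_of_nonneg hξ hx

theorem eq_zero_of_dotR_eq_zero {ξ x : Fin n → ℝ} (hξ : ∀ i, 0 < ξ i) (hx : 0 ≤ x)
    (h : dotR ξ x = 0) : x = 0 := by
  have hterms := (Finset.sum_eq_zero_iff_of_nonneg fun i _ => mul_nonneg (hξ i).le (hx i)).1 h
  funext i
  exact (mul_eq_zero.1 (hterms i (Finset.mem_univ i))).resolve_left (hξ i).ne'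

end DotR

theorem Real.exists_neg_of_sInf_neg {s : Set ℝ} (h : sInf s < 0) : ∃ r ∈ s, r < 0 := by
  by_contra! hs
  exact h.not_ge (Real.sInf_nonneg hs)

theorem mem_convexHull_setOf_eq_of_le {E : Type*} [AddCommGroup E] [Module ℝ E] {s : Set E}
    {f : E →ₗ[ℝ] ℝ} {m : ℝ} {x : E} (hs : ∀ y ∈ s, m ≤ f y) (hx : x ∈ convexHull ℝ s)
    (hfx : f x ≤ m) : x ∈ convexHull ℝ {y ∈ s | f y = m} := by
  suffices h : convexHull ℝ s ⊆ {x | m ≤ f x ∧ (f x ≤ m → x ∈ convexHull ℝ {y ∈ s | f y = m})}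
    from (h hx).2 hfx
  refine convexHull_min (fun y hy => ⟨hs y hy, fun h =>
    subset_convexHull ℝ _ ⟨hy, le_antisymm h (hs y hy)⟩⟩) ?_
  -- on an open segment both weights are positive, so `f ≤ m` there forces `f = m` at both ends
  refine convex_iff_openSegment_subset.2 fun y ⟨hy, hy'⟩ z ⟨hz, hz'⟩ x ⟨p, q, hp, hq, hpq, hx⟩ => ?_
  subst hx
  have hpy := mul_le_mul_of_nonneg_left hy hp.le
  have hqz := mul_le_mul_of_nonneg_left hz hq.le
  have hm : m = p * m + q * m := by rw [← add_mul, hpq, one_mul]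
  simp only [map_add, map_smul, smul_eq_mul, Set.mem_ofPred_eq]
  refine ⟨by linarith, fun hle => convex_convexHull ℝ _ (hy' ?_) (hz' ?_) hp.le hq.le hpq⟩
  · by_contra! h
    linarith [mul_lt_mul_of_pos_left h hp]
  · by_contra! h
    linarith [mul_lt_mul_of_pos_left h hq]

theorem convex_faceOf {n : ℕ} {Δ : Set (Fin n → ℝ)} (hΔ : Convex ℝ Δ) (ξ : Fin n → ℝ) :
    Convex ℝ (faceOf Δ ξ) := by
  intro x hx y hy p q hp hq hpq
  refine ⟨hΔ hx.1 hy.1 hp hq hpq, fun z hz => ?_⟩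
  have hsplit : dotR ξ z = p * dotR ξ z + q * dotR ξ z := by rw [← add_mul, hpq, one_mul]
  rw [dotR_add, dotR_smul, dotR_smul]
  linarith [mul_le_mul_of_nonneg_left (hx.2 z hz) hp, mul_le_mul_of_nonneg_left (hy.2 z hz) hq]

section NewtonHull

variable {n : ℕ} {A : Set (Fin n → ℝ)}

abbrev newtonHull (A : Set (Fin n → ℝ)) : Set (Fin n → ℝ) := convexHull ℝ (A + posOrthant n)

theorem posOrthant_eq_Ici (n : ℕ) : posOrthant n = Set.Ici 0 := rfl

theorem newtonHull_eq_convexHull_add :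
    newtonHull A = convexHull ℝ A + posOrthant n := by
  rw [newtonHull, convexHull_add, posOrthant_eq_Ici, (convex_Ici _).convexHull_eq]

theorem subset_newtonHull : A ⊆ newtonHull A := fun g hg =>
  subset_convexHull ℝ _ ⟨g, hg, 0, le_refl (0 : Fin n → ℝ), add_zero g⟩

theorem add_mem_newtonHull {x q : Fin n → ℝ} (hx : x ∈ newtonHull A)
    (hq : 0 ≤ q) : x + q ∈ newtonHull A := by
  rw [newtonHull_eq_convexHull_add] at hx ⊢
  obtain ⟨y, hy, r, hr, rfl⟩ := hx
  exact ⟨y, hy, r + q, add_nonneg hr hq, (add_assoc y r q).symm⟩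

theorem le_dotR_of_mem_newtonHull {ξ x : Fin n → ℝ} {c : ℝ} (hξ : 0 ≤ ξ)
    (hA : ∀ g ∈ A, c ≤ dotR ξ g) (hx : x ∈ newtonHull A) :
    c ≤ dotR ξ x := by
  rw [newtonHull_eq_convexHull_add] at hx
  obtain ⟨y, hy, q, hq, rfl⟩ := hx
  have hcy : c ≤ dotR ξ y := convexHull_min hA (convex_halfSpace_ge (dotRLinear ξ).isLinear c) hy
  rw [dotR_add]
  linarith [dotR_nonneg hξ hq]

theorem exists_dotR_le_of_mem_newtonHull {ξ x : Fin n → ℝ} (hξ : 0 ≤ ξ)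
    (hx : x ∈ newtonHull A) : ∃ g ∈ A, dotR ξ g ≤ dotR ξ x := by
  rw [newtonHull_eq_convexHull_add] at hx
  obtain ⟨y, hy, q, hq, rfl⟩ := hx
  obtain ⟨g, hg, hgy⟩ :=
    ((dotRLinear ξ).concaveOn convex_univ).exists_le_of_mem_convexHull (Set.subset_univ A) hy
  refine ⟨g, hg, ?_⟩
  rw [dotR_add]
  linarith [dotR_nonneg hξ hq, show dotR ξ g ≤ dotR ξ y from hgy]

theorem mem_faceOf_newtonHull {ξ x : Fin n → ℝ} (hξ : 0 ≤ ξ)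
    (hx : x ∈ newtonHull A) (hA : ∀ g ∈ A, dotR ξ x ≤ dotR ξ g) :
    x ∈ faceOf (newtonHull A) ξ :=
  ⟨hx, fun _ hy => le_dotR_of_mem_newtonHull hξ hA hy⟩

theorem faceOf_newtonHull {η : Fin n → ℝ} (hη : ∀ i, 0 < η i) :
    faceOf (newtonHull A) η = convexHull ℝ (faceOf A η) := by
  refine Set.Subset.antisymm ?_ (convexHull_min (fun g hg =>
    mem_faceOf_newtonHull (fun i => (hη i).le) (subset_newtonHull hg.1) hg.2)
    (convex_faceOf (convex_convexHull ℝ _) η))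
  rintro x ⟨hxΔ, hxmin⟩
  have hAx : ∀ g ∈ A, dotR η x ≤ dotR η g := fun g hg => hxmin g (subset_newtonHull hg)
  rw [newtonHull_eq_convexHull_add] at hxΔ
  obtain ⟨y, hy, q, hq, rfl⟩ := hxΔ
  have hyΔ : y ∈ newtonHull A :=
    convexHull_min subset_newtonHull (convex_convexHull ℝ _) hy
  have hq0 : q = 0 := by
    refine eq_zero_of_dotR_eq_zero hη hq ?_
    have := hxmin y hyΔ
    rw [dotR_add] at this
    linarith [dotR_nonneg (fun i => (hη i).le) hq]
  simp only [hq0, add_zero] at hAx ⊢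
  have hlevel : {g ∈ A | dotRLinear η g = dotR η y} ⊆ faceOf A η :=
    fun g hg => ⟨hg.1, fun g' hg' => hg.2.le.trans (hAx g' hg')⟩
  exact convexHull_mono hlevel (mem_convexHull_setOf_eq_of_le (f := dotRLinear η) hAx hy le_rfl)

theorem ne_zero_of_isCompact_faceOf {ξ x : Fin n → ℝ}
    (hx : x ∈ faceOf (newtonHull A) ξ)
    (hcpt : IsCompact (faceOf (newtonHull A) ξ)) (i : Fin n) : ξ i ≠ 0 := by
  intro hξi
  obtain ⟨R, hR⟩ := (hcpt.image (continuous_apply i)).bddAbove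
  have hray : ∀ t : ℝ, 0 ≤ t →
      x + t • Pi.single i 1 ∈ faceOf (newtonHull A) ξ := by
    intro t ht
    have hq : 0 ≤ t • (Pi.single i 1 : Fin n → ℝ) := smul_nonneg ht (Pi.single_nonneg.2 zero_le_one)
    refine ⟨add_mem_newtonHull hx.1 hq, fun y hy => ?_⟩
    have hdot : dotR ξ (Pi.single i 1) = ξ i := by simp [dotR_eq_dotProduct]
    rw [dotR_add, dotR_smul, hdot, hξi, mul_zero, add_zero]
    exact hx.2 y hy
  have hfar := hR ⟨_, hray (R + 1 - x i) (by linarith [hR ⟨x, hx, rfl⟩]), rfl⟩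
  simp only [Pi.add_apply, Pi.smul_apply, Pi.single_eq_same, smul_eq_mul, mul_one] at hfar
  linarith

end NewtonHull

section Lattice

variable {n : ℕ}

theorem IsNewtonPolyhedron.exists_eq_newtonHull {Δ : Set (Fin n → ℝ)}
    (hΔ : IsNewtonPolyhedron Δ) :
    ∃ S : Set (Fin n → ℕ), Δ = newtonHull ((fun α : Fin n → ℕ => fun i => (α i : ℝ)) '' S) :=
  let ⟨S, _, hS⟩ := hΔ
  ⟨S, hS⟩

theorem finite_setOf_natCast_dotR_le {η : Fin n → ℝ} (hη : ∀ i, 0 < η i)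
    (S : Set (Fin n → ℕ)) (B : ℝ) :
    {g ∈ (fun α : Fin n → ℕ => fun i => (α i : ℝ)) '' S | dotR η g ≤ B}.Finite := by
  refine ((Set.finite_Iic fun i => ⌊B / η i⌋₊).image fun α i => (α i : ℝ)).subset ?_
  rintro _ ⟨⟨α, -, rfl⟩, hB⟩
  refine ⟨α, fun i => Nat.le_floor ?_, rfl⟩
  rw [le_div_iff₀ (hη i), mul_comm]
  refine le_trans ?_ hB
  exact Finset.single_le_sum (f := fun j => η j * (α j : ℝ))
    (fun j _ => mul_nonneg (hη j).le (Nat.cast_nonneg _)) (Finset.mem_univ i)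

theorem IsNewtonPolyhedron.isCompact_faceOf {Δ : Set (Fin n → ℝ)} (hΔ : IsNewtonPolyhedron Δ)
    {η : Fin n → ℝ} (hη : ∀ i, 0 < η i) : IsCompact (faceOf Δ η) := by
  obtain ⟨S, rfl⟩ := hΔ.exists_eq_newtonHull
  rw [faceOf_newtonHull hη]
  suffices hfin : (faceOf _ η).Finite from hfin.isCompact_convexHull (𝕜 := ℝ)
  rcases (faceOf _ η).eq_empty_or_nonempty with hempty | ⟨g₀, hg₀, -⟩
  · exact hempty ▸ Set.finite_empty
  · exact (finite_setOf_natCast_dotR_le hη S (dotR η g₀)).subset fun g hg => ⟨hg.1, hg.2 g₀ hg₀⟩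

end Lattice

theorem exists_min_slope {ι : Type*} {s : Set ι} {u w : ι → ℝ} {W : ℝ}
    (hfin : ∀ B, {i ∈ s | u i ≤ B}.Finite) (hu : ∀ i ∈ s, 0 ≤ u i) (hW : ∀ i ∈ s, w i ≤ W)
    (hpos : ∀ i ∈ s, 0 < w i → 0 < u i) {i₀ : ι} (hi₀ : i₀ ∈ s) (hwi₀ : 0 < w i₀) :
    ∃ ε > 0, (∀ i ∈ s, ε * w i ≤ u i) ∧ ∃ j ∈ s, 0 < w j ∧ u j = ε * w j := by
  set r₀ := u i₀ / w i₀
  have hr₀ : 0 ≤ r₀ := div_nonneg (hu i₀ hi₀) hwi₀.le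
  have hW₀ : 0 < W := hwi₀.trans_le (hW i₀ hi₀)
  -- a slope below `r₀` needs `u i ≤ r₀ * W`, so only finitely many indices compete
  set T := {i ∈ s | 0 < w i ∧ u i ≤ r₀ * W}
  have hi₀T : i₀ ∈ T := by
    refine ⟨hi₀, hwi₀, ?_⟩
    rw [← div_mul_cancel₀ (u i₀) hwi₀.ne']
    exact mul_le_mul_of_nonneg_left (hW i₀ hi₀) hr₀
  obtain ⟨j, ⟨hj, hwj, -⟩, hjmin⟩ := Set.exists_min_image T (fun i => u i / w i)
    ((hfin (r₀ * W)).subset fun i hi => ⟨hi.1, hi.2.2⟩) ⟨i₀, hi₀T⟩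
  refine ⟨u j / w j, div_pos (hpos j hj hwj) hwj, fun i hi => ?_, j, hj, hwj,
    (div_mul_cancel₀ _ hwj.ne').symm⟩
  have hε : 0 ≤ u j / w j := div_nonneg (hu j hj) hwj.le
  rcases le_or_gt (w i) 0 with hwi | hwi
  · exact (mul_nonpos_of_nonneg_of_nonpos hε hwi).trans (hu i hi)
  rcases le_or_gt (u i) (r₀ * W) with hui | hui
  · exact (le_div_iff₀ hwi).1 (hjmin i ⟨hi, hwi, hui⟩)
  · calc u j / w j * w i ≤ r₀ * W :=
          mul_le_mul (hjmin i₀ hi₀T) (hW i hi) hwi.le hr₀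
      _ ≤ u i := hui.le

theorem two_le_faceDim {n : ℕ} {F : Set (Fin n → ℝ)} {ξ a b c : Fin n → ℝ} (ha : a ∈ F)
    (hb : b ∈ F) (hc : c ∈ F) (hab : a ≠ b) (hξab : dotR ξ a = dotR ξ b)
    (hξc : dotR ξ c ≠ dotR ξ a) : 2 ≤ faceDim F := by
  have hind : LinearIndependent ℝ ![(⟨b - a, vsub_mem_vectorSpan ℝ hb ha⟩ : vectorSpan ℝ F),
      ⟨c - a, vsub_mem_vectorSpan ℝ hc ha⟩] := by
    rw [LinearIndependent.pair_iff]
    intro s t hst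
    have hvec : s • (b - a) + t • (c - a) = 0 := congrArg Subtype.val hst
    have ht : t = 0 := by
      have := congrArg (dotRLinear ξ) hvec
      simp only [map_add, map_smul, map_sub, map_zero, dotRLinear_apply, hξab, sub_self,
        smul_eq_mul, mul_zero, zero_add] at this
      exact (mul_eq_zero.1 this).resolve_right (sub_ne_zero.2 (hξc.trans_eq hξab))
    refine ⟨?_, ht⟩
    rw [ht, zero_smul, add_zero] at hvec
    exact (smul_eq_zero.1 hvec).resolve_right (sub_ne_zero.2 hab.symm)
  simpa [faceDim] using hind.fintype_card_le_finrank

theorem exists_tilted_faceOf {n : ℕ} {A : Set (Fin n → ℝ)} {ξ₀ ξ₁ a b v : Fin n → ℝ}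
    (hξ₀ : 0 ≤ ξ₀) (hξ₁ : 0 ≤ ξ₁) (hA : ∀ g ∈ A, 0 ≤ g)
    (hfin : ∀ B, {g ∈ A | dotR ξ₀ g ≤ B}.Finite)
    (hE : faceOf (newtonHull A) ξ₀ = segment ℝ a b)
    (habξ₁ : dotR ξ₁ a = dotR ξ₁ b) (hv : v ∈ newtonHull A)
    (hva : dotR ξ₁ v < dotR ξ₁ a) :
    ∃ ε : ℝ, 0 < ε ∧ ∃ c, a ∈ faceOf (newtonHull A) (ξ₀ + ε • ξ₁) ∧
      b ∈ faceOf (newtonHull A) (ξ₀ + ε • ξ₁) ∧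
      c ∈ faceOf (newtonHull A) (ξ₀ + ε • ξ₁) ∧ dotR ξ₁ c < dotR ξ₁ a := by
  set Δ := newtonHull A
  have ha : a ∈ faceOf Δ ξ₀ := hE ▸ left_mem_segment ℝ a b
  have hb : b ∈ faceOf Δ ξ₀ := hE ▸ right_mem_segment ℝ a b
  have hbaξ₀ : dotR ξ₀ b = dotR ξ₀ a := le_antisymm (hb.2 a ha.1) (ha.2 b hb.1)
  have hEξ₁ : ∀ x ∈ faceOf Δ ξ₀, dotR ξ₁ x = dotR ξ₁ a := fun x hx =>
    (convex_hyperplane (dotRLinear ξ₁).isLinear _).segment_subset rfl habξ₁.symm (hE ▸ hx)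
  have hpos : ∀ g ∈ A, 0 < dotR ξ₁ a - dotR ξ₁ g → 0 < dotR ξ₀ g - dotR ξ₀ a := by
    intro g hg hlt
    refine sub_pos.2 ((ha.2 g (subset_newtonHull hg)).lt_of_ne fun heq => ?_)
    have hgE : g ∈ faceOf Δ ξ₀ := ⟨subset_newtonHull hg, fun y hy => heq ▸ ha.2 y hy⟩
    linarith [hEξ₁ g hgE]
  obtain ⟨g₀, hg₀, hg₀v⟩ := exists_dotR_le_of_mem_newtonHull hξ₁ hv
  obtain ⟨ε, hε, hεle, c, hc, hcpos, hceq⟩ := exists_min_slope (s := A) (W := dotR ξ₁ a)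
    (u := fun g => dotR ξ₀ g - dotR ξ₀ a) (w := fun g => dotR ξ₁ a - dotR ξ₁ g)
    (fun B => (hfin (B + dotR ξ₀ a)).subset fun g hg => ⟨hg.1, by linarith [hg.2]⟩)
    (fun g hg => sub_nonneg.2 (ha.2 g (subset_newtonHull hg)))
    (fun g hg => by linarith [dotR_nonneg hξ₁ (hA g hg)]) hpos hg₀ (by linarith)
  have haη : a ∈ faceOf Δ (ξ₀ + ε • ξ₁) :=
    mem_faceOf_newtonHull (add_nonneg hξ₀ (smul_nonneg hε.le hξ₁)) ha.1 fun g hg => by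
      rw [dotR_add_smul_left, dotR_add_smul_left]
      linarith [hεle g hg]
  have hlevel : ∀ x ∈ Δ, dotR (ξ₀ + ε • ξ₁) x = dotR (ξ₀ + ε • ξ₁) a →
      x ∈ faceOf Δ (ξ₀ + ε • ξ₁) := fun x hx hxa => ⟨hx, fun y hy => hxa ▸ haη.2 y hy⟩
  refine ⟨ε, hε, c, haη, hlevel b hb.1 ?_, hlevel c (subset_newtonHull hc) ?_, by linarith⟩
  · rw [dotR_add_smul_left, dotR_add_smul_left, hbaξ₀, hEξ₁ b hb]
  · rw [dotR_add_smul_left, dotR_add_smul_left]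
    linear_combination hceq

theorem looseEdge_psi_nonneg_general {n : ℕ} (Δ E : Set (Fin n → ℝ)) (a b : Fin n → ℝ)
    (hΔ : IsNewtonPolyhedron Δ) (hseg : E = segment ℝ a b) (hab : a ≠ b)
    (hloose : IsLooseEdge Δ E) :
    ¬ ∃ ξ : Fin n → ℝ, (∀ i, 0 ≤ ξ i) ∧ dotR ξ a = dotR ξ b ∧
      sInf {r : ℝ | ∃ v : Fin n → ℝ, IsVertexOf Δ v ∧ v ≠ a ∧ v ≠ b ∧
        r = dotR ξ v - dotR ξ a} < 0 := by
  rintro ⟨ξ₁, hξ₁, habξ₁, hψ⟩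
  obtain ⟨⟨ξ₀, hξ₀, rfl⟩, hcpt, -, hmax⟩ := hloose
  obtain ⟨_, ⟨v, ⟨ζ, -, hvface⟩, -, -, rfl⟩, hva⟩ := Real.exists_neg_of_sInf_neg hψ
  have hvΔ : v ∈ Δ := (hvface.subset (Set.mem_singleton v)).1
  obtain ⟨S, rfl⟩ := hΔ.exists_eq_newtonHull
  have hξ₀pos : ∀ i, 0 < ξ₀ i := fun i => (hξ₀ i).lt_of_ne
    (ne_zero_of_isCompact_faceOf (hseg ▸ left_mem_segment ℝ a b) hcpt i).symm
  obtain ⟨ε, hε, c, ha, hb, hc, hca⟩ := exists_tilted_faceOf hξ₀ hξ₁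
    (by rintro _ ⟨α, -, rfl⟩ i; exact Nat.cast_nonneg _)
    (finite_setOf_natCast_dotR_le hξ₀pos S) hseg habξ₁ hvΔ (by linarith)
  have hηpos : ∀ i, 0 < (ξ₀ + ε • ξ₁) i := fun i =>
    add_pos_of_pos_of_nonneg (hξ₀pos i) (mul_nonneg hε.le (hξ₁ i))
  have hdim_le := hmax _ ⟨_, fun i => (hηpos i).le, rfl⟩ (hΔ.isCompact_faceOf hηpos)
    (hseg ▸ (convex_faceOf (convex_convexHull ℝ _) _).segment_subset ha hb)
  have hdim_ge := two_le_faceDim ha hb hc hab habξ₁ hca.ne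
  omega

/-- If `E` is a loose edge with endpoints `a`, `b` and the vertex set of `Δ` contains a
vertex other than `a`, `b`, then there is no `ξ ≥ 0` with `⟨ξ,a⟩ = ⟨ξ,b⟩` and
`ψ(ξ) = min_{v ∈ V∖{a,b}} (⟨ξ,v⟩ - ⟨ξ,a⟩) < 0`. -/
theorem looseEdge_psi_nonneg {n : ℕ} (Δ E : Set (Fin n → ℝ)) (a b : Fin n → ℝ)
    (hΔ : IsNewtonPolyhedron Δ) (hEface : IsFaceOf Δ E) (hcpt : IsCompact E)
    (hdim : faceDim E = 1) (hseg : E = segment ℝ a b) (hab : a ≠ b)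
    (hV : ∃ v : Fin n → ℝ, IsVertexOf Δ v ∧ v ≠ a ∧ v ≠ b)
    (hloose : IsLooseEdge Δ E) :
    ¬ ∃ ξ : Fin n → ℝ, (∀ i, 0 ≤ ξ i) ∧ dotR ξ a = dotR ξ b ∧
      sInf {r : ℝ | ∃ v : Fin n → ℝ, IsVertexOf Δ v ∧ v ≠ a ∧ v ≠ b ∧
        r = dotR ξ v - dotR ξ a} < 0 :=
  looseEdge_psi_nonneg_general Δ E a b hΔ hseg hab hloose
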